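/- Let γ ∈ ℝ and let ℓ(s) = n_ℓ(s)/d_ℓ(s) (coprime real polynomials) be a strictly proper real rational function with an even number (counted with multiplicity) of poles with positive real part and no poles on the imaginary axis. If |γ| < 1 and sup_{ω∈ℝ} |γ ℓ(iω)| < 1, then the polynomial d_ℓ(s) − γ n_ℓ(s) has no roots on the imaginary axis and an even number (counted with multiplicity) of roots with positive real part. -/

import Mathlib

/-!
A real polynomial `p` with `p(0) ≠ 0` has an even number of roots in the open right half
plane iff `p(0)` and its leading coefficient have the same sign: splitting off a real root `x`
multiplies `p(0) / lead p` by `-x`, and splitting off a conjugate pair `r, r̄` multiplies it by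
`‖r‖² > 0` while changing the count by `0` or `2`. Since `deg (γ n_ℓ) < deg d_ℓ`, the polynomials
`d_ℓ` and `d_ℓ - γ n_ℓ` share their leading coefficient, and `γ ℓ(0) < 1` makes
`d_ℓ(0) - γ n_ℓ(0)` have the sign of `d_ℓ(0)`. On the imaginary axis `d_ℓ - γ n_ℓ = d_ℓ (1 - γ ℓ)`
does not vanish as `|γ ℓ(iω)| < 1`; that pointwise bound needs `ω ↦ |ℓ(iω)|` to be bounded
(otherwise the real `⨆` is `0`), which holds because `ℓ` is strictly proper and has no poles on
the axis.
-/

open Polynomial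

/-- Evaluation of the real rational function `n/d` at a complex argument. -/
noncomputable def ratEval (n d : Polynomial ℝ) (s : ℂ) : ℂ :=
  (n.map (algebraMap ℝ ℂ)).eval s / (d.map (algebraMap ℝ ℂ)).eval s

/-- All complex poles of `δ = b/a` (i.e. roots of `a`) have negative real part. -/
def StableRat (a : Polynomial ℝ) : Prop :=
  ∀ z : ℂ, (a.map (algebraMap ℝ ℂ)).eval z = 0 → z.re < 0

/-- `δ = b/a` is a proper stable real rational function that internally stabilizes
`g = n/d` under positive feedback: every root of `a d − b n` has negative real part. -/
def Stabilizes (b a n d : Polynomial ℝ) : Prop :=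
  a ≠ 0 ∧ IsCoprime b a ∧ b.degree ≤ a.degree ∧ StableRat a ∧
    ∀ z : ℂ, ((a * d - b * n).map (algebraMap ℝ ℂ)).eval z = 0 → z.re < 0

/-- `sup_{ω ∈ ℝ} |g(iω)|` for `g = n/d`. -/
noncomputable def hinfNorm (n d : Polynomial ℝ) : ℝ :=
  ⨆ ω : ℝ, ‖ratEval n d (ω * Complex.I)‖

/-- Number of poles (roots of `d`), with multiplicity, in the open right half plane. -/
noncomputable def orhpCount (d : Polynomial ℝ) : ℕ :=
  Multiset.card ((d.map (algebraMap ℝ ℂ)).roots.filter (fun z => 0 < z.re))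

/-- Robust instability radius of `g = n/d`: infimum of `‖δ‖_{H∞}` over `δ ∈ S(g)`
(`+∞` if `S(g)` is empty). -/
noncomputable def RIR (n d : Polynomial ℝ) : ENNReal :=
  sInf { r : ENNReal | ∃ b a : Polynomial ℝ,
    Stabilizes b a n d ∧ r = ENNReal.ofReal (hinfNorm b a) }

/-- `μ(e)` : infimum of `‖δ‖_{H∞}` over `δ ∈ S(g)` with `δ(0) = e`. -/
noncomputable def Mu (n d : Polynomial ℝ) (e : ℝ) : ENNReal :=
  sInf { r : ENNReal | ∃ b a : Polynomial ℝ,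
    Stabilizes b a n d ∧ b.eval 0 / a.eval 0 = e ∧ r = ENNReal.ofReal (hinfNorm b a) }

/-- The characteristic polynomial `chp` achieves `ω_c`-stability: simple root at `iω_c`
(and at `−iω_c` when `ω_c ≠ 0`), all other roots with negative real part. -/
def OmegaStable (chp : Polynomial ℝ) (ωc : ℝ) : Prop :=
  Polynomial.rootMultiplicity ((ωc : ℂ) * Complex.I) (chp.map (algebraMap ℝ ℂ)) = 1 ∧
  (ωc ≠ 0 → Polynomial.rootMultiplicity (-((ωc : ℂ) * Complex.I)) (chp.map (algebraMap ℝ ℂ)) = 1) ∧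
  ∀ z : ℂ, (chp.map (algebraMap ℝ ℂ)).eval z = 0 →
    z ≠ (ωc : ℂ) * Complex.I → z ≠ -((ωc : ℂ) * Complex.I) → z.re < 0

open Complex ComplexConjugate Filter Bornology

lemma eval_map_ofReal (p : ℝ[X]) (x : ℝ) :
    (p.map (algebraMap ℝ ℂ)).eval (x : ℂ) = p.eval x := by
  rw [eval_map_algebraMap]
  exact (ofReal_eval p x).symm

lemma orhpCount_mul {p q : ℝ[X]} (hp : p ≠ 0) (hq : q ≠ 0) :
    orhpCount (p * q) = orhpCount p + orhpCount q := by
  rw [orhpCount, Polynomial.map_mul, roots_mul (by simp [hp, hq]), Multiset.filter_add,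
    Multiset.card_add, orhpCount, orhpCount]

lemma orhpCount_C (a : ℝ) : orhpCount (C a) = 0 := by
  simp [orhpCount]

lemma orhpCount_X_sub_C (x : ℝ) : orhpCount (X - C x) = if 0 < x then 1 else 0 := by
  by_cases h : 0 < x <;> simp [orhpCount, Multiset.filter_singleton, h]

lemma map_quadratic_eq_mul_conj (r : ℂ) :
    (X ^ 2 - C (2 * r.re) * X + C (‖r‖ ^ 2) : ℝ[X]).map (algebraMap ℝ ℂ) =
      (X - C (conj r)) * (X - C r) := by
  have hre : ((2 * r.re : ℝ) : ℂ) = conj r + r := by rw [add_comm, add_conj]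
  have hnorm : ((‖r‖ ^ 2 : ℝ) : ℂ) = conj r * r := by
    rw [mul_comm, mul_conj']
    push_cast
    rfl
  rw [Polynomial.map_add, Polynomial.map_sub, Polynomial.map_mul, Polynomial.map_pow, map_X,
    map_C, map_C, coe_algebraMap, hre, hnorm, C_add, C_mul]
  ring

lemma even_orhpCount_quadratic (r : ℂ) :
    Even (orhpCount (X ^ 2 - C (2 * r.re) * X + C (‖r‖ ^ 2))) := by
  rw [orhpCount, map_quadratic_eq_mul_conj, roots_mul (mul_ne_zero (X_sub_C_ne_zero _)
    (X_sub_C_ne_zero _)), roots_X_sub_C, roots_X_sub_C]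
  by_cases h : 0 < r.re <;> simp [Multiset.filter_singleton, h]

lemma mul_pos_iff_pos_iff_pos {R : Type*} [Ring R] [LinearOrder R] [IsStrictOrderedRing R]
    {x y : R} (hx : x ≠ 0) (hy : y ≠ 0) :
    0 < x * y ↔ (0 < x ↔ 0 < y) := by
  rcases hx.lt_or_gt with hx | hx <;> rcases hy.lt_or_gt with hy | hy <;>
    simp [hx, hy, hx.not_gt, hy.not_gt, mul_pos_of_neg_of_neg]

lemma even_orhpCount_mul_iff {p q : ℝ[X]} (hp0 : p.eval 0 ≠ 0) (hq0 : q.eval 0 ≠ 0)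
    (hp : Even (orhpCount p) ↔ 0 < p.eval 0 * p.leadingCoeff)
    (hq : Even (orhpCount q) ↔ 0 < q.eval 0 * q.leadingCoeff) :
    Even (orhpCount (p * q)) ↔ 0 < (p * q).eval 0 * (p * q).leadingCoeff := by
  have hp' : p ≠ 0 := fun h => hp0 (by simp [h])
  have hq' : q ≠ 0 := fun h => hq0 (by simp [h])
  rw [orhpCount_mul hp' hq', Nat.even_add, hp, hq, eval_mul, leadingCoeff_mul,
    mul_mul_mul_comm, mul_pos_iff_pos_iff_pos (mul_ne_zero hp0 (leadingCoeff_ne_zero.2 hp'))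
      (mul_ne_zero hq0 (leadingCoeff_ne_zero.2 hq'))]

lemma exists_factor_even_orhpCount_iff {p : ℝ[X]} (hp : 0 < p.natDegree) :
    ∃ f q : ℝ[X], p = f * q ∧ 0 < f.natDegree ∧
      (f.eval 0 ≠ 0 → (Even (orhpCount f) ↔ 0 < f.eval 0 * f.leadingCoeff)) := by
  obtain ⟨r, hr⟩ := exists_root (f := p.map (algebraMap ℝ ℂ))
    (by rwa [degree_map, ← natDegree_pos_iff_degree_pos])
  by_cases him : r.im = 0
  · have hroot : p.IsRoot r.re := by
      have hr' : r = (r.re : ℂ) := ext rfl (by simpa using him)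
      rw [IsRoot, hr', eval_map_ofReal] at hr
      exact_mod_cast hr
    refine ⟨X - C r.re, p /ₘ (X - C r.re), (mul_divByMonic_eq_iff_isRoot.2 hroot).symm,
      by simp, fun h0 => ?_⟩
    have hx : r.re ≠ 0 := by simpa using h0
    rw [orhpCount_X_sub_C]
    rcases hx.lt_or_gt with hx | hx <;> simp [hx, hx.not_gt]
  · obtain ⟨q, hq⟩ := p.quadratic_dvd_of_aeval_eq_zero_im_ne_zero
      (by rwa [← eval_map_algebraMap]) him
    have hQ : (X ^ 2 - C (2 * r.re) * X + C (‖r‖ ^ 2) : ℝ[X]).natDegree = 2 := by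
      compute_degree!
    have hQ1 : (X ^ 2 - C (2 * r.re) * X + C (‖r‖ ^ 2) : ℝ[X]).Monic := by monicity!
    refine ⟨_, q, hq, by rw [hQ]; exact two_pos, fun _ => ?_⟩
    have hr : r ≠ 0 := fun h => him (by simp [h])
    rw [iff_true_intro (even_orhpCount_quadratic r), true_iff, hQ1.leadingCoeff, mul_one]
    simpa using pow_pos (norm_pos_iff.2 hr) 2

theorem even_orhpCount_iff {p : ℝ[X]} (hp0 : p.eval 0 ≠ 0) :
    Even (orhpCount p) ↔ 0 < p.eval 0 * p.leadingCoeff := by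
  induction h : p.natDegree using Nat.strong_induction_on generalizing p with
  | _ n ih =>
  rcases n.eq_zero_or_pos with rfl | hn
  · rw [eq_C_of_natDegree_eq_zero h] at hp0 ⊢
    simpa [orhpCount_C] using mul_self_pos.2 hp0
  obtain ⟨f, q, rfl, hf, hfrule⟩ := exists_factor_even_orhpCount_iff (h ▸ hn)
  rw [eval_mul] at hp0
  have hq : q ≠ 0 := fun hq => by simp [hq] at hp0
  have hfq : f ≠ 0 := fun hf => by simp [hf] at hp0
  refine even_orhpCount_mul_iff (left_ne_zero_of_mul hp0) (right_ne_zero_of_mul hp0)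
    (hfrule (left_ne_zero_of_mul hp0)) (ih q.natDegree ?_ (right_ne_zero_of_mul hp0) rfl)
  rw [← h, natDegree_mul hfq hq]
  omega

lemma ratEval_ofReal (n d : ℝ[X]) (x : ℝ) : ratEval n d x = ↑(n.eval x / d.eval x) := by
  rw [ratEval, eval_map_ofReal, eval_map_ofReal, ofReal_div]

lemma ratEval_C_mul (γ : ℝ) (n d : ℝ[X]) (s : ℂ) :
    ratEval (C γ * n) d s = γ * ratEval n d s := by
  simp [ratEval, mul_div_assoc]

lemma Continuous.bddAbove_range_of_eventually_le {X α : Type*} [TopologicalSpace X]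
    [LinearOrder α] [TopologicalSpace α] [ClosedIciTopology α] {f : X → α}
    (hf : Continuous f) {c : α} (h : ∀ᶠ x in cocompact X, f x ≤ c) :
    BddAbove (Set.range f) := by
  have : Nonempty α := ⟨c⟩
  obtain ⟨K, hK, hKc⟩ := mem_cocompact.1 h
  refine ((hK.bddAbove_image hf.continuousOn).union (bddAbove_Iic (a := c))).mono ?_
  rintro _ ⟨x, rfl⟩
  by_cases hx : x ∈ K
  exacts [Or.inl ⟨x, hx, rfl⟩, Or.inr (hKc hx)]

lemma tendsto_ofReal_mul_I_cobounded :
    Tendsto (fun ω : ℝ => (ω : ℂ) * I) (cocompact ℝ) (cobounded ℂ) := by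
  rw [← tendsto_norm_atTop_iff_cobounded, ← Metric.cobounded_eq_cocompact]
  simpa only [norm_mul, norm_I, mul_one, norm_real] using tendsto_norm_cobounded_atTop (E := ℝ)

lemma bddAbove_range_norm_ratEval_mul_I {n d : ℝ[X]} (hdeg : n.degree < d.degree)
    (hd : ∀ ω : ℝ, (d.map (algebraMap ℝ ℂ)).eval (ω * I) ≠ 0) :
    BddAbove (Set.range fun ω : ℝ => ‖ratEval n d (ω * I)‖) := by
  have hcont : Continuous fun ω : ℝ => ‖ratEval n d (ω * I)‖ := by
    unfold ratEval
    fun_prop (disch := exact hd _)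
  have hO := (isLittleO_cobounded_of_degree_lt (P := n.map (algebraMap ℝ ℂ))
    (Q := d.map (algebraMap ℝ ℂ)) (by rwa [degree_map, degree_map])).bound one_pos
  refine hcont.bddAbove_range_of_eventually_le (c := 1) ?_
  filter_upwards [tendsto_ofReal_mul_I_cobounded.eventually hO] with ω hω
  rw [ratEval, norm_div]
  exact div_le_one_of_le₀ (by simpa only [one_mul] using hω) (norm_nonneg _)

lemma eval_map_sub_ne_zero_of_norm_ratEval_lt_one {m d : ℝ[X]} {s : ℂ}
    (hd : (d.map (algebraMap ℝ ℂ)).eval s ≠ 0)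
    (hlt : ‖ratEval m d s‖ < 1) : ((d - m).map (algebraMap ℝ ℂ)).eval s ≠ 0 := by
  have hfactor : ((d - m).map (algebraMap ℝ ℂ)).eval s =
      (d.map (algebraMap ℝ ℂ)).eval s * (1 - ratEval m d s) := by
    rw [ratEval, mul_sub, mul_div_cancel₀ _ hd, Polynomial.map_sub, eval_sub, mul_one]
  rw [hfactor]
  refine mul_ne_zero hd (sub_ne_zero.2 fun h => ?_)
  simp [← h] at hlt

lemma even_orhpCount_sub_of_degree_lt {m d : ℝ[X]} (hdeg : m.degree < d.degree)
    (hd0 : d.eval 0 ≠ 0) (hlt : m.eval 0 / d.eval 0 < 1) (heven : Even (orhpCount d)) :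
    Even (orhpCount (d - m)) := by
  have hsign : 0 < (d - m).eval 0 * d.eval 0 := by
    have h : (d - m).eval 0 * d.eval 0 = d.eval 0 ^ 2 * (1 - m.eval 0 / d.eval 0) := by
      rw [eval_sub]
      field_simp
    rw [h]
    exact mul_pos (by positivity) (sub_pos.2 hlt)
  have he0 := left_ne_zero_of_mul hsign.ne'
  rw [even_orhpCount_iff hd0] at heven
  have hL := right_ne_zero_of_mul heven.ne'
  rw [even_orhpCount_iff he0, leadingCoeff_sub_of_degree_lt hdeg, mul_pos_iff_pos_iff_pos he0 hL]
  exact ((mul_pos_iff_pos_iff_pos he0 hd0).1 hsign).trans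
    ((mul_pos_iff_pos_iff_pos hd0 hL).1 heven)

theorem stmt16_general (γ : ℝ) (nl dl : Polynomial ℝ)
    (hsp : nl.degree < dl.degree)
    (heven : Even (orhpCount dl))
    (hnoimag : ∀ ω : ℝ, (dl.map (algebraMap ℝ ℂ)).eval ((ω : ℂ) * Complex.I) ≠ 0)
    (hsg : (⨆ ω : ℝ, ‖(γ : ℂ) * ratEval nl dl ((ω : ℂ) * Complex.I)‖) < 1) :
    (∀ z : ℂ, ((dl - Polynomial.C γ * nl).map (algebraMap ℝ ℂ)).eval z = 0 → z.re ≠ 0) ∧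
    Even (orhpCount (dl - Polynomial.C γ * nl)) := by
  have hdeg : (C γ * nl).degree < dl.degree := by
    rw [← smul_eq_C_mul]
    exact (degree_smul_le γ nl).trans_lt hsp
  simp only [← ratEval_C_mul] at hsg
  have hlt : ∀ ω : ℝ, ‖ratEval (C γ * nl) dl (ω * I)‖ < 1 := fun ω =>
    (le_ciSup (bddAbove_range_norm_ratEval_mul_I hdeg hnoimag) ω).trans_lt hsg
  have hI0 : ((0 : ℝ) : ℂ) * I = ((0 : ℝ) : ℂ) := by simp
  refine ⟨fun z hz hre => ?_, even_orhpCount_sub_of_degree_lt hdeg ?_ ?_ heven⟩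
  · rw [show z = (z.im : ℂ) * I from ext (by simp [hre]) (by simp)] at hz
    exact eval_map_sub_ne_zero_of_norm_ratEval_lt_one (hnoimag z.im) (hlt z.im) hz
  · have h := hnoimag 0
    rw [hI0, eval_map_ofReal] at h
    exact_mod_cast h
  · have h := hlt 0
    rw [hI0, ratEval_ofReal, norm_real, Real.norm_eq_abs] at h
    exact (le_abs_self _).trans_lt h

/-- under the same hypotheses, `d_ℓ − γ n_ℓ` has no roots on the
imaginary axis and an even number (with multiplicity) of ORHP roots. -/
theorem stmt16 (γ : ℝ) (nl dl : Polynomial ℝ) (hdl : dl ≠ 0) (hcop : IsCoprime nl dl)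
    (hsp : nl.degree < dl.degree)
    (heven : Even (orhpCount dl))
    (hnoimag : ∀ ω : ℝ, (dl.map (algebraMap ℝ ℂ)).eval ((ω : ℂ) * Complex.I) ≠ 0)
    (hγ : |γ| < 1)
    (hsg : (⨆ ω : ℝ, ‖(γ : ℂ) * ratEval nl dl ((ω : ℂ) * Complex.I)‖) < 1) :
    (∀ z : ℂ, ((dl - Polynomial.C γ * nl).map (algebraMap ℝ ℂ)).eval z = 0 → z.re ≠ 0) ∧
    Even (orhpCount (dl - Polynomial.C γ * nl)) :=
  stmt16_general γ nl dl hsp heven hnoimag hsg
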